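/- arXiv:1202.2566 — 3 statements merged into one kernel-verified Lean document; each statement's English description precedes it below -/
import Mathlib

section
/- Let m ≥ 2 be an integer and let G be a finite abelian group whose exponent divides m. Then for any non-empty subset A ⊆ G and any subset S ⊆ G that generates G, one has ∂_S(A) ≥ (e/m)·|A|·ln(|G|/|A|), where e is Euler's number. -/
/-- Distance from `x` to the nearest integer: `‖x‖`. -/
noncomputable def nearestIntDist (x : ℝ) : ℝ := |x - (round x : ℝ)|

/-- The generalized Takagi function
`ω_m(x) = ∑_{k=0}^∞ m^{-k} ‖m^k x‖_{1/m}`, where `‖·‖_α = min{‖·‖, α}`. -/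
noncomputable def omegaT (m : ℕ) (x : ℝ) : ℝ :=
  ∑' k : ℕ, ((m : ℝ) ^ k)⁻¹ * min (nearestIntDist ((m : ℝ) ^ k * x)) (1 / m)

/-- The directed edge boundary `∂_S(A) = |{(a,s) ∈ A × S : a + s ∉ A}|`. -/
def edgeBoundary {G : Type*} [AddCommGroup G] [Fintype G] [DecidableEq G]
    (S A : Finset G) : ℕ :=
  ((A ×ˢ S).filter fun p => p.1 + p.2 ∉ A).card

/-!
Induction on `|G|`. Pick a nonzero `s ∈ S`; its order `d` divides `m`. Project onto
`Q = G ⧸ ⟨s⟩`, let `a i` be the number of points of `A` in the coset `i`, and let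
`B t = {i | t ≤ a i}` for `1 ≤ t ≤ d`, so that `|A| = ∑ₜ |B t|`. Each coset that `A` fills
partially (`i ∈ B 1 \ B d`) contains an `s`-edge leaving `A`. For every other generator `s'`,
the `[s']`-edges leaving the sets `B t` from `i` number `a i - a (i + [s'])`, at most the
`s'`-edges leaving `A` from that coset. Hence `|B 1| - |B d| + ∑ₜ ∂(B t) ≤ ∂_S(A)`.
Applying induction to each `B t` and using `d ≤ m`, the claim reduces, for `cₜ = |B t|`, to
`∑ₜ cₜ log (d cₜ / ∑ c) ≤ d (c₁ - c_d) / e` with `c₁ ≥ cₜ ≥ c_d ≥ 0`, which follows from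
convexity of `x log x` on `[c_d, c₁]` and the bound `e (1 - v) u log u ≤ (u - v)²` for
`0 ≤ v ≤ 1 ≤ u`.
-/

open Finset Real AddSubgroup QuotientAddGroup

lemma exp_one_mul_log_le_self {u : ℝ} (hu : 0 < u) : exp 1 * log u ≤ u := by
  have h := log_le_sub_one_of_pos (div_pos hu (exp_pos 1))
  rw [log_div hu.ne' (exp_pos 1).ne', log_exp, sub_le_sub_iff_right,
    le_div_iff₀ (exp_pos 1)] at h
  linarith

lemma exp_one_mul_log_two_le_two : exp 1 * log 2 ≤ 2 := by
  nlinarith [exp_one_lt_d9, log_two_lt_d9, exp_pos 1, log_pos one_lt_two]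

lemma exp_neg_two_mul_log_two_le {x : ℝ} (hx₀ : 0 ≤ x) (hx₁ : x ≤ 1 / 2) :
    exp (-(2 * x * log 2)) ≤ 1 - x := by
  have h := convexOn_exp.2 (Set.mem_univ 0) (Set.mem_univ (-log 2))
    (by linarith : 0 ≤ 1 - 2 * x) (by linarith : 0 ≤ 2 * x) (by ring)
  simp only [smul_eq_mul, mul_zero, zero_add, exp_zero, exp_neg, exp_log two_pos] at h
  calc exp (-(2 * x * log 2)) = exp (2 * x * -log 2) := by ring_nf
    _ ≤ (1 - 2 * x) * 1 + 2 * x * 2⁻¹ := h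
    _ = 1 - x := by ring

lemma exp_one_mul_mul_log_le_four_mul_sub_one {u : ℝ} (hu : 1 ≤ u) (h : exp 1 * log u ≤ 2) :
    exp 1 * (u * log u) ≤ 4 * (u - 1) := by
  -- with `x = e log u / 4 ≤ 1 / 2`: `u ≥ 4 ^ x` and `4 ^ (-x) ≤ 1 - x`, so `u (1 - x) ≥ 1`
  obtain ⟨x, hx⟩ : ∃ x, x = exp 1 * log u / 4 := ⟨_, rfl⟩
  have hlog : 0 ≤ log u := log_nonneg hu
  have hx₀ : 0 ≤ x := by rw [hx]; positivity
  have hu_ge : exp (2 * x * log 2) ≤ u :=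
    calc exp (2 * x * log 2) ≤ exp (log u) := exp_le_exp.2 <| by
          rw [hx]
          nlinarith [mul_le_mul_of_nonneg_right exp_one_mul_log_two_le_two hlog]
      _ = u := exp_log (by linarith)
  have : 1 ≤ u * (1 - x) :=
    calc 1 = exp (2 * x * log 2) * exp (-(2 * x * log 2)) := by rw [← exp_add]; simp
      _ ≤ u * (1 - x) := mul_le_mul hu_ge (exp_neg_two_mul_log_two_le hx₀ (by linarith))
          (exp_pos _).le (by linarith)
  have hux : u * x = exp 1 * (u * log u) / 4 := by rw [hx]; ring
  linarith

lemma exp_one_mul_one_sub_mul_mul_log_le_sq {u v : ℝ} (hu : 1 ≤ u) (hv₀ : 0 ≤ v) (hv₁ : v ≤ 1) :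
    exp 1 * ((1 - v) * (u * log u)) ≤ (u - v) ^ 2 := by
  set K := exp 1 * (u * log u)
  have hK : exp 1 * ((1 - v) * (u * log u)) = K * (1 - v) := by ring
  rw [hK]
  rcases le_or_gt (exp 1 * log u) 2 with h | h
  · -- `(u - v)² ≥ 4 (u - 1) (1 - v)` by AM-GM
    nlinarith [exp_one_mul_mul_log_le_four_mul_sub_one hu h, sq_nonneg (u - 1 - (1 - v))]
  · have h2u : 2 * u ≤ K := by nlinarith
    have hKu : K ≤ u ^ 2 := by nlinarith [exp_one_mul_log_le_self (by linarith : 0 < u)]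
    nlinarith

lemma mul_mul_log_le_of_mem_Icc {u v x : ℝ} (hv : 0 ≤ v) (hx : x ∈ Set.Icc v u) :
    (u - v) * (x * log x) ≤ (u - x) * (v * log v) + (x - v) * (u * log u) := by
  obtain ⟨hvx, hxu⟩ := hx
  rcases hvx.eq_or_lt with rfl | hvx
  · ring_nf; rfl
  rcases hxu.eq_or_lt with rfl | hxu
  · ring_nf; rfl
  exact convexOn_mul_log.secant_mono_aux1 hv (hv.trans (hvx.trans hxu).le) hvx hxu

lemma sum_mul_log_le_of_mem_Icc {ι : Type*} (s : Finset ι) (x : ι → ℝ) {u v : ℝ} (hv : 0 ≤ v)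
    (hx : ∀ i ∈ s, x i ∈ Set.Icc v u) (hsum : ∑ i ∈ s, x i = #s) :
    ∑ i ∈ s, x i * log (x i) ≤ #s * (u - v) / exp 1 := by
  rcases s.eq_empty_or_nonempty with rfl | hs
  · simp
  have hcard : (0 : ℝ) < #s := by exact_mod_cast hs.card_pos
  have hv₁ : v ≤ 1 := by
    have := card_nsmul_le_sum s x v fun i hi => (hx i hi).1
    rw [hsum, nsmul_eq_mul] at this
    nlinarith
  have hu₁ : 1 ≤ u := by
    have := sum_le_card_nsmul s x u fun i hi => (hx i hi).2
    rw [hsum, nsmul_eq_mul] at this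
    nlinarith
  rcases (hv₁.trans hu₁).eq_or_lt with rfl | hvu
  · have hx₁ : ∀ i ∈ s, x i = 1 := fun i hi =>
      le_antisymm (by linarith [(hx i hi).2]) (by linarith [(hx i hi).1])
    rw [sum_eq_zero fun i hi => by rw [hx₁ i hi, log_one, mul_zero]]
    simp
  have chord : (u - v) * ∑ i ∈ s, x i * log (x i)
      ≤ #s * ((u - 1) * (v * log v) + (1 - v) * (u * log u)) := by
    rw [mul_sum]
    refine (sum_le_sum fun i hi => mul_mul_log_le_of_mem_Icc hv (hx i hi)).trans_eq ?_
    rw [sum_add_distrib, ← sum_mul, ← sum_mul, sum_sub_distrib, sum_sub_distrib, hsum]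
    simp only [sum_const, nsmul_eq_mul]
    ring
  have hvlog : v * log v ≤ 0 := mul_nonpos_of_nonneg_of_nonpos hv (log_nonpos hv hv₁)
  have key := exp_one_mul_one_sub_mul_mul_log_le_sq hu₁ hv hv₁
  refine le_of_mul_le_mul_left ?_ (sub_pos.2 hvu)
  calc (u - v) * ∑ i ∈ s, x i * log (x i)
      ≤ #s * ((u - 1) * (v * log v) + (1 - v) * (u * log u)) := chord
    _ ≤ #s * ((u - v) ^ 2 / exp 1) := by
      gcongr
      rw [le_div_iff₀' (exp_pos 1)]
      have : (u - 1) * (v * log v) ≤ 0 := mul_nonpos_of_nonneg_of_nonpos (sub_nonneg.2 hu₁) hvlog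
      nlinarith [mul_nonpos_of_nonneg_of_nonpos (exp_pos 1).le this]
    _ = (u - v) * (#s * (u - v) / exp 1) := by ring

lemma exp_one_mul_sum_mul_log_le {ι : Type*} (s : Finset ι) (c : ι → ℝ) {μ M n : ℝ}
    (hμ : 0 ≤ μ) (hc : ∀ i ∈ s, c i ∈ Set.Icc μ M) (hn : 0 < n) (ha : 0 < ∑ i ∈ s, c i) :
    exp 1 * (∑ i ∈ s, c i) * log (n * #s / ∑ i ∈ s, c i)
      ≤ ∑ i ∈ s, exp 1 * c i * log (n / c i) + #s * (M - μ) := by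
  set a := ∑ i ∈ s, c i
  have hs : (0 : ℝ) < #s := by exact_mod_cast (nonempty_of_sum_ne_zero ha.ne').card_pos
  have hsplit : ∀ i ∈ s,
      c i * log (n * #s / a) = c i * log (n / c i) + c i * log (#s * c i / a) := by
    intro i hi
    rcases (hμ.trans (hc i hi).1).eq_or_lt with h0 | hpos
    · simp [← h0]
    · rw [← mul_add, ← log_mul (by positivity) (by positivity)]
      congr 2
      field_simp
  have hnormalized : ∑ i ∈ s, c i * log (#s * c i / a)
      = a / #s * ∑ i ∈ s, #s * c i / a * log (#s * c i / a) := by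
    rw [mul_sum]
    refine sum_congr rfl fun i _ => ?_
    field_simp
  have hmean := sum_mul_log_le_of_mem_Icc s (fun i => #s * c i / a) (u := #s * M / a)
    (v := #s * μ / a) (by positivity)
    (fun i hi => ⟨by gcongr; exact (hc i hi).1, by gcongr; exact (hc i hi).2⟩)
    (by rw [← sum_div, ← mul_sum, mul_div_assoc, div_self ha.ne', mul_one])
  calc exp 1 * a * log (n * #s / a) = exp 1 * ∑ i ∈ s, c i * log (n * #s / a) := by
        rw [← sum_mul]; ring
    _ = ∑ i ∈ s, exp 1 * c i * log (n / c i) + exp 1 * ∑ i ∈ s, c i * log (#s * c i / a) := by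
        rw [sum_congr rfl hsplit, sum_add_distrib, mul_add, mul_sum]
        simp only [mul_assoc]
    _ ≤ ∑ i ∈ s, exp 1 * c i * log (n / c i)
          + exp 1 * (a / #s * (#s * (#s * M / a - #s * μ / a) / exp 1)) := by
        rw [hnormalized]
        gcongr
    _ = ∑ i ∈ s, exp 1 * c i * log (n / c i) + #s * (M - μ) := by
        field_simp

lemma exp_one_div_mul_sum_mul_log_le_of_le {ι : Type*} (s : Finset ι) (c E : ι → ℝ)
    {μ M n m E₀ : ℝ} (hμ : 0 ≤ μ) (hc : ∀ i ∈ s, c i ∈ Set.Icc μ M) (hn : 0 < n)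
    (ha : 0 < ∑ i ∈ s, c i) (hm : #s ≤ m)
    (hE : ∀ i ∈ s, exp 1 / m * c i * log (n / c i) ≤ E i) (hE₀ : M - μ + ∑ i ∈ s, E i ≤ E₀) :
    exp 1 / m * (∑ i ∈ s, c i) * log (n * #s / ∑ i ∈ s, c i) ≤ E₀ := by
  obtain ⟨i, hi⟩ := nonempty_of_sum_ne_zero ha.ne'
  have hs : (0 : ℝ) < #s := by exact_mod_cast card_pos.2 ⟨i, hi⟩
  have hμM : 0 ≤ M - μ := sub_nonneg.2 ((hc i hi).1.trans (hc i hi).2)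
  have hm₀ : 0 ≤ m := hs.le.trans hm
  calc exp 1 / m * (∑ i ∈ s, c i) * log (n * #s / ∑ i ∈ s, c i)
      = (exp 1 * (∑ i ∈ s, c i) * log (n * #s / ∑ i ∈ s, c i)) / m := by ring
    _ ≤ (∑ i ∈ s, exp 1 * c i * log (n / c i) + #s * (M - μ)) / m := by
        gcongr
        exact exp_one_mul_sum_mul_log_le s c hμ hc hn ha
    _ = ∑ i ∈ s, exp 1 / m * c i * log (n / c i) + #s / m * (M - μ) := by
        rw [add_div, sum_div]
        congr 1
        · exact sum_congr rfl fun i _ => by ring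
        · ring
    _ ≤ ∑ i ∈ s, E i + (M - μ) :=
        add_le_add (sum_le_sum hE) (mul_le_of_le_one_left hμM (div_le_one_of_le₀ hm hm₀))
    _ ≤ E₀ := by linarith

section Groups

variable {G Q : Type*} [AddCommGroup G] [AddCommGroup Q]

section EdgeBoundary

variable [Fintype G] [DecidableEq G]

lemma edgeBoundary_singleton (s : G) (A : Finset G) :
    edgeBoundary {s} A = #{x ∈ A | x + s ∉ A} := by
  rw [edgeBoundary, product_singleton, filter_map, card_map]
  rfl

lemma edgeBoundary_eq_sum (S A : Finset G) :
    edgeBoundary S A = ∑ s ∈ S, edgeBoundary {s} A := by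
  simp only [edgeBoundary, card_filter, sum_product]
  exact sum_comm

lemma edgeBoundary_singleton_zero (A : Finset G) : edgeBoundary {0} A = 0 := by
  simp [edgeBoundary_singleton]

lemma edgeBoundary_image_le {α : Type*} (f : α → G) (S : Finset α) (A : Finset G) :
    edgeBoundary (S.image f) A ≤ ∑ s ∈ S, edgeBoundary {f s} A := by
  rw [edgeBoundary_eq_sum]
  exact sum_image_le_of_nonneg fun _ _ => Nat.zero_le _

end EdgeBoundary

section Fibers

variable [DecidableEq Q]

def fiberCard (p : G →+ Q) (A : Finset G) (i : Q) : ℕ := #{x ∈ A | p x = i}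

lemma sum_fiberCard [Fintype Q] (p : G →+ Q) (A : Finset G) : ∑ i, fiberCard p A i = #A :=
  (card_eq_sum_card_fiberwise fun x _ => mem_univ (p x)).symm

lemma edgeBoundary_singleton_eq_sum_fiber [Fintype G] [DecidableEq G] [Fintype Q]
    (p : G →+ Q) (s : G) (A : Finset G) :
    edgeBoundary {s} A = ∑ i, #{x ∈ A | p x = i ∧ x + s ∉ A} := by
  rw [edgeBoundary_singleton, card_eq_sum_card_fiberwise fun x _ => mem_univ (p x)]
  simp only [filter_filter, and_comm]

lemma fiberCard_sub_fiberCard_le [DecidableEq G] (p : G →+ Q) (A : Finset G) (s : G) (i : Q) :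
    fiberCard p A i - fiberCard p A (i + p s) ≤ #{x ∈ A | p x = i ∧ x + s ∉ A} := by
  have hsplit : #{x ∈ A | p x = i ∧ x + s ∈ A} + #{x ∈ A | p x = i ∧ x + s ∉ A}
      = fiberCard p A i := by
    rw [fiberCard, ← filter_filter, ← filter_filter]
    exact card_filter_add_card_filter_not _
  have htranslate : #{x ∈ A | p x = i ∧ x + s ∈ A} ≤ fiberCard p A (i + p s) := by
    refine card_le_card_of_injOn (· + s) (fun x hx => ?_) fun x _ y _ => add_right_cancel
    simp only [coe_filter, Set.mem_ofPred_eq] at hx ⊢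
    exact ⟨hx.2.2, by rw [map_add, hx.2.1]⟩
  omega

end Fibers

section Superlevel

def superlevel {α : Type*} [Fintype α] (a : α → ℕ) (t : ℕ) : Finset α := {i | t ≤ a i}

lemma superlevel_anti {α : Type*} [Fintype α] (a : α → ℕ) : Antitone (superlevel a) :=
  fun _ _ h _ hi => by simp only [superlevel, mem_filter] at hi ⊢; exact ⟨hi.1, h.trans hi.2⟩

lemma card_filter_Icc_le_and_not_le {d j k : ℕ} (hk : k ≤ d) :
    #{t ∈ Icc 1 d | t ≤ k ∧ ¬t ≤ j} = k - j := by
  rw [← Nat.card_Ioc]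
  congr 1
  ext t
  simp only [mem_filter, mem_Icc, mem_Ioc]
  omega

lemma sum_card_superlevel {α : Type*} [Fintype α] {d : ℕ} (a : α → ℕ) (ha : ∀ i, a i ≤ d) :
    ∑ t ∈ Icc 1 d, #(superlevel a t) = ∑ i, a i := by
  simp only [superlevel, card_filter]
  rw [sum_comm]
  refine sum_congr rfl fun i _ => ?_
  have hIcc : {t ∈ Icc 1 d | t ≤ a i} = Icc 1 (a i) := by
    ext t
    simp only [mem_filter, mem_Icc]
    have := ha i
    omega
  rw [← card_filter, hIcc, Nat.card_Icc, Nat.add_sub_cancel]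

lemma sum_edgeBoundary_superlevel [Fintype Q] [DecidableEq Q] {d : ℕ} (a : Q → ℕ)
    (ha : ∀ i, a i ≤ d) (σ : Q) :
    ∑ t ∈ Icc 1 d, edgeBoundary {σ} (superlevel a t) = ∑ i, (a i - a (i + σ)) := by
  simp only [edgeBoundary_singleton, superlevel, filter_filter, mem_filter, mem_univ, true_and,
    card_filter]
  rw [sum_comm]
  refine sum_congr rfl fun i _ => ?_
  rw [← card_filter, card_filter_Icc_le_and_not_le (ha i)]

end Superlevel

section Projection

variable [Fintype G] [DecidableEq G] [Fintype Q] [DecidableEq Q]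

lemma sum_edgeBoundary_superlevel_le (p : G →+ Q) (A : Finset G) {d : ℕ}
    (hd : ∀ i, fiberCard p A i ≤ d) (s : G) :
    ∑ t ∈ Icc 1 d, edgeBoundary {p s} (superlevel (fiberCard p A) t) ≤ edgeBoundary {s} A := by
  rw [sum_edgeBoundary_superlevel _ hd, edgeBoundary_singleton_eq_sum_fiber p]
  exact sum_le_sum fun i _ => fiberCard_sub_fiberCard_le p A s i

lemma sum_edgeBoundary_image_superlevel_le (p : G →+ Q) (A : Finset G) {d : ℕ}
    (hd : ∀ i, fiberCard p A i ≤ d) {S : Finset G} {s : G} (hsS : s ∈ S) (hs : p s = 0) :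
    ∑ t ∈ Icc 1 d, edgeBoundary (S.image p) (superlevel (fiberCard p A) t)
      ≤ ∑ s' ∈ S.erase s, edgeBoundary {s'} A :=
  calc ∑ t ∈ Icc 1 d, edgeBoundary (S.image p) (superlevel (fiberCard p A) t)
      ≤ ∑ t ∈ Icc 1 d, ∑ s' ∈ S, edgeBoundary {p s'} (superlevel (fiberCard p A) t) :=
        sum_le_sum fun t _ => edgeBoundary_image_le _ _ _
    _ = ∑ s' ∈ S.erase s, ∑ t ∈ Icc 1 d, edgeBoundary {p s'} (superlevel (fiberCard p A) t) := by
        rw [sum_comm, ← add_sum_erase _ _ hsS, hs]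
        simp [edgeBoundary_singleton_zero]
    _ ≤ ∑ s' ∈ S.erase s, edgeBoundary {s'} A :=
        sum_le_sum fun s' _ => sum_edgeBoundary_superlevel_le p A hd s'

end Projection

section CyclicQuotient

variable [Fintype G] [DecidableEq G] (s : G) [DecidableEq (G ⧸ zmultiples s)]

lemma filter_mk'_eq_image_range (x₀ : G) :
    ({x | mk' (zmultiples s) x = mk' (zmultiples s) x₀} : Finset G)
      = (range (addOrderOf s)).image (x₀ + · • s) := by
  ext y
  rw [mem_filter, mk'_apply, mk'_apply, eq_comm, QuotientAddGroup.eq,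
    mem_zmultiples_iff_mem_range_addOrderOf]
  simp only [mem_univ, true_and, mem_image]
  exact exists_congr fun n => and_congr_right fun _ => by rw [eq_neg_add_iff_add_eq]

lemma card_filter_mk'_eq (i : G ⧸ zmultiples s) :
    #({x | mk' (zmultiples s) x = i} : Finset G) = addOrderOf s := by
  obtain ⟨x₀, rfl⟩ := mk'_surjective _ i
  rw [filter_mk'_eq_image_range, card_image_of_injOn, card_range]
  exact fun n hn n' hn' h => nsmul_injOn_Iio_addOrderOf (by simpa using hn) (by simpa using hn')
    (add_left_cancel h)

lemma fiberCard_mk'_le (A : Finset G) (i : G ⧸ zmultiples s) :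
    fiberCard (mk' (zmultiples s)) A i ≤ addOrderOf s :=
  (card_le_card (filter_subset_filter _ (subset_univ A))).trans_eq (card_filter_mk'_eq s i)

lemma exists_add_notMem_of_fiberCard_lt (A : Finset G) (i : G ⧸ zmultiples s)
    (hpos : 0 < fiberCard (mk' (zmultiples s)) A i)
    (hlt : fiberCard (mk' (zmultiples s)) A i < addOrderOf s) :
    ∃ x ∈ A, mk' (zmultiples s) x = i ∧ x + s ∉ A := by
  by_contra! hclosed
  obtain ⟨x₀, hx₀⟩ := card_pos.1 hpos
  rw [mem_filter] at hx₀
  have hiter : ∀ n : ℕ, x₀ + n • s ∈ A := by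
    intro n
    induction n with
    | zero => simpa using hx₀.1
    | succ n ih =>
      rw [succ_nsmul, ← add_assoc]
      exact hclosed _ ih (by simpa using hx₀.2)
  refine hlt.not_ge ((card_filter_mk'_eq s i).symm.trans_le (card_le_card fun y hy => ?_))
  rw [← hx₀.2, filter_mk'_eq_image_range] at hy
  obtain ⟨n, -, rfl⟩ := mem_image.1 hy
  exact mem_filter.2 ⟨hiter n, by simpa using hx₀.2⟩

variable [Fintype (G ⧸ zmultiples s)]

lemma card_superlevel_sdiff_le (A : Finset G) :
    #(superlevel (fiberCard (mk' (zmultiples s)) A) 1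
        \ superlevel (fiberCard (mk' (zmultiples s)) A) (addOrderOf s)) ≤ edgeBoundary {s} A := by
  rw [edgeBoundary_singleton_eq_sum_fiber (mk' (zmultiples s)), card_eq_sum_ones]
  refine (sum_le_sum fun i hi => ?_).trans (sum_le_sum_of_subset (subset_univ _))
  simp only [superlevel, mem_sdiff, mem_filter, mem_univ, true_and, not_le] at hi
  obtain ⟨x, hxA, hx, hxs⟩ := exists_add_notMem_of_fiberCard_lt s A i hi.1 hi.2
  exact card_pos.2 ⟨x, mem_filter.2 ⟨hxA, hx, hxs⟩⟩

lemma card_superlevel_sdiff_add_sum_edgeBoundary_le (A : Finset G) {S : Finset G} (hsS : s ∈ S) :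
    #(superlevel (fiberCard (mk' (zmultiples s)) A) 1
        \ superlevel (fiberCard (mk' (zmultiples s)) A) (addOrderOf s))
      + ∑ t ∈ Icc 1 (addOrderOf s),
          edgeBoundary (S.image (mk' (zmultiples s))) (superlevel (fiberCard (mk' (zmultiples s)) A) t)
      ≤ edgeBoundary S A := by
  rw [edgeBoundary_eq_sum, ← add_sum_erase _ _ hsS]
  exact add_le_add (card_superlevel_sdiff_le s A) (sum_edgeBoundary_image_superlevel_le _ A
    (fiberCard_mk'_le s A) hsS ((QuotientAddGroup.eq_zero_iff s).2 (mem_zmultiples s)))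

end CyclicQuotient

lemma closure_image_eq_top [DecidableEq Q] {f : G →+ Q} (hf : Function.Surjective f)
    {S : Finset G} (hS : closure (S : Set G) = ⊤) :
    closure ((S.image f : Finset Q) : Set Q) = ⊤ := by
  rw [coe_image, ← AddMonoidHom.map_closure, hS, map_top_of_surjective f hf]

lemma card_eq_card_quotient_mul_addOrderOf [Fintype G] (s : G) [Fintype (G ⧸ zmultiples s)] :
    Fintype.card G = Fintype.card (G ⧸ zmultiples s) * addOrderOf s := by
  rw [← Nat.card_eq_fintype_card, ← Nat.card_eq_fintype_card, ← Nat.card_zmultiples]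
  exact card_eq_card_quotient_mul_card_addSubgroup _

lemma card_quotient_zmultiples_lt [Fintype G] {s : G} [Fintype (G ⧸ zmultiples s)] (hs : s ≠ 0) :
    Fintype.card (G ⧸ zmultiples s) < Fintype.card G := by
  rw [card_eq_card_quotient_mul_addOrderOf s]
  refine lt_mul_of_one_lt_right Fintype.card_pos ?_
  have hne : addOrderOf s ≠ 1 := mt AddMonoid.addOrderOf_eq_one_iff.1 hs
  have := addOrderOf_pos s
  omega

lemma card_mul_log_card_div_card_eq_zero {α : Type*} [Fintype α] [Subsingleton α]
    (A : Finset α) : (#A : ℝ) * log (Fintype.card α / #A) = 0 := by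
  rcases A.eq_empty_or_nonempty with rfl | ⟨x, hx⟩
  · simp
  · have hA : A = univ := eq_univ_of_forall fun y => Subsingleton.elim x y ▸ hx
    have : Nonempty α := ⟨x⟩
    rw [hA, card_univ, div_self (Nat.cast_ne_zero.2 Fintype.card_ne_zero), log_one, mul_zero]

theorem exp_one_div_mul_card_mul_log_le_of_quotient [Fintype G] [DecidableEq G] {m : ℕ}
    (hm : 0 < m) (hexp : AddMonoid.exponent G ∣ m) {A S : Finset G} {s : G} (hsS : s ∈ S)
    [Fintype (G ⧸ zmultiples s)] [DecidableEq (G ⧸ zmultiples s)]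
    (ih : ∀ B : Finset (G ⧸ zmultiples s),
      exp 1 / m * #B * log (Fintype.card (G ⧸ zmultiples s) / #B)
        ≤ edgeBoundary (S.image (mk' (zmultiples s))) B) :
    exp 1 / m * #A * log (Fintype.card G / #A) ≤ edgeBoundary S A := by
  rcases A.eq_empty_or_nonempty with rfl | hA
  · simp
  set d := addOrderOf s
  set B := superlevel (fiberCard (mk' (zmultiples s)) A)
  have hsum : ∑ t ∈ Icc 1 d, (#(B t) : ℝ) = #A := by
    exact_mod_cast (sum_card_superlevel _ (fiberCard_mk'_le s A)).trans (sum_fiberCard _ A)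
  have hB : ∀ t ∈ Icc 1 d, (#(B t) : ℝ) ∈ Set.Icc (#(B d) : ℝ) #(B 1) := fun t ht => by
    rw [mem_Icc] at ht
    exact ⟨by exact_mod_cast card_le_card (superlevel_anti _ ht.2),
      by exact_mod_cast card_le_card (superlevel_anti _ ht.1)⟩
  have hdm : (#(Icc 1 d) : ℝ) ≤ m := by
    rw [Nat.card_Icc, Nat.add_sub_cancel]
    exact_mod_cast Nat.le_of_dvd hm ((AddMonoid.addOrder_dvd_exponent s).trans hexp)
  have hcount : (#(B 1) : ℝ) - #(B d)
      + ∑ t ∈ Icc 1 d, (edgeBoundary (S.image (mk' (zmultiples s))) (B t) : ℝ)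
      ≤ edgeBoundary S A := by
    have hBd : B d ⊆ B 1 := superlevel_anti _ (addOrderOf_pos s)
    have := card_superlevel_sdiff_add_sum_edgeBoundary_le s A hsS
    rw [card_sdiff_of_subset hBd] at this
    rw [← Nat.cast_sub (card_le_card hBd)]
    exact_mod_cast this
  have key := exp_one_div_mul_sum_mul_log_le_of_le (Icc 1 d) (fun t => (#(B t) : ℝ))
    (fun t => (edgeBoundary (S.image (mk' (zmultiples s))) (B t) : ℝ)) (Nat.cast_nonneg _) hB
    (n := Fintype.card (G ⧸ zmultiples s)) (by exact_mod_cast Fintype.card_pos)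
    (by rw [hsum]; exact_mod_cast hA.card_pos) hdm (fun t _ => ih (B t)) hcount
  rwa [hsum, Nat.card_Icc, Nat.add_sub_cancel, ← Nat.cast_mul,
    ← card_eq_card_quotient_mul_addOrderOf] at key

end Groups

theorem stmt0 {G : Type*} [AddCommGroup G] [Fintype G] [DecidableEq G]
    {m : ℕ} (hm : 2 ≤ m) (hexp : AddMonoid.exponent G ∣ m)
    {A S : Finset G}
    (hS : AddSubgroup.closure (S : Set G) = ⊤) :
    Real.exp 1 / m * A.card * Real.log ((Fintype.card G : ℝ) / A.card)
      ≤ (edgeBoundary S A : ℝ) := by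
  classical
  by_cases h : ∀ s ∈ S, s = 0
  · have hG : ∀ x : G, x = 0 := fun x => by
      have hx : x ∈ closure (S : Set G) := hS ▸ mem_top x
      rwa [closure_eq_bot_iff.2 fun y hy => h y hy, mem_bot] at hx
    have : Subsingleton G := ⟨fun x y => (hG x).trans (hG y).symm⟩
    rw [mul_assoc, card_mul_log_card_div_card_eq_zero A, mul_zero]
    positivity
  · obtain ⟨s, hsS, hs⟩ := not_forall₂.1 h
    exact exp_one_div_mul_card_mul_log_le_of_quotient (by omega) hexp hsS fun B =>
      stmt0 hm ((AddGroup.exponent_quotient_dvd _).trans hexp)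
        (closure_image_eq_top (mk'_surjective _) hS)
termination_by Fintype.card G
decreasing_by exact card_quotient_zmultiples_lt hs
end

section
/- For every real number x, ω_4(x) = (1/2)·ω_2(x); that is, the 4-adic generalized Takagi function is half the classical Takagi function. -/
theorem tsum_eq_tsum_even_add_odd {E : Type*} [NormedAddCommGroup E] [CompleteSpace E]
    {f : ℕ → E} (hf : Summable f) : ∑' k, f k = ∑' k, (f (2 * k) + f (2 * k + 1)) := by
  have hmul : Function.Injective (2 * · : ℕ → ℕ) := mul_right_injective₀ two_ne_zero
  have he := (hf.comp_injective hmul).hasSum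
  have ho := (hf.comp_injective ((add_left_injective 1).comp hmul)).hasSum
  exact ((he.even_add_odd ho).tsum_eq).trans (he.add ho).tsum_eq.symm

theorem nearestIntDist_nonneg (x : ℝ) : 0 ≤ nearestIntDist x := abs_nonneg _

theorem nearestIntDist_le_half (x : ℝ) : nearestIntDist x ≤ 1 / 2 := abs_sub_round x

theorem nearestIntDist_le (x : ℝ) (n : ℤ) : nearestIntDist x ≤ |x - n| := round_le x n

theorem nearestIntDist_add_intCast (x : ℝ) (n : ℤ) : nearestIntDist (x + n) = nearestIntDist x := by
  simp only [nearestIntDist, round_add_intCast, Int.cast_add, add_sub_add_right_eq_sub]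

theorem nearestIntDist_neg (x : ℝ) : nearestIntDist (-x) = nearestIntDist x := by
  have neg_le (y : ℝ) : nearestIntDist (-y) ≤ nearestIntDist y :=
    calc nearestIntDist (-y) ≤ |-y - ((-round y : ℤ) : ℝ)| := nearestIntDist_le _ _
      _ = nearestIntDist y := by rw [Int.cast_neg, neg_sub_neg, abs_sub_comm]; rfl
  exact le_antisymm (neg_le x) (by simpa using neg_le (-x))

theorem nearestIntDist_abs (x : ℝ) : nearestIntDist |x| = nearestIntDist x := by
  rcases abs_choice x with h | h <;> rw [h]
  exact nearestIntDist_neg x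

theorem nearestIntDist_eq_min_of_mem_Icc {t : ℝ} (ht₀ : 0 ≤ t) (ht₁ : t ≤ 1) :
    nearestIntDist t = min t (1 - t) := by
  refine le_antisymm (le_min ?_ ?_) ?_
  · simpa [abs_of_nonneg ht₀] using nearestIntDist_le t 0
  · simpa [abs_of_nonpos (sub_nonpos.2 ht₁)] using nearestIntDist_le t 1
  · rcases le_or_gt (round t) 0 with hn | hn
    · have : (round t : ℝ) ≤ 0 := by exact_mod_cast hn
      exact (min_le_left _ _).trans ((by linarith : t ≤ t - round t).trans (le_abs_self _))
    · have : (1 : ℝ) ≤ round t := by exact_mod_cast hn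
      exact (min_le_right _ _).trans ((by linarith : 1 - t ≤ -(t - round t)).trans (neg_le_abs _))

theorem nearestIntDist_two_mul (y : ℝ) :
    nearestIntDist (2 * y) = nearestIntDist (2 * nearestIntDist y) := by
  have hshift : 2 * y = 2 * (y - round y) + ((2 * round y : ℤ) : ℝ) := by push_cast; ring
  rw [hshift, nearestIntDist_add_intCast, ← nearestIntDist_abs, abs_mul, abs_two]
  rfl

theorem nearestIntDist_add_half_nearestIntDist_two_mul (y : ℝ) :
    nearestIntDist y + 1 / 2 * nearestIntDist (2 * y) = 2 * min (nearestIntDist y) (1 / 4) := by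
  have h₀ := nearestIntDist_nonneg y
  have h₁ := nearestIntDist_le_half y
  rw [nearestIntDist_two_mul,
    nearestIntDist_eq_min_of_mem_Icc (t := 2 * nearestIntDist y) (by linarith) (by linarith)]
  rcases le_total (nearestIntDist y) (1 / 4) with h | h
  · rw [min_eq_left (by linarith), min_eq_left h]
    ring
  · rw [min_eq_right (by linarith), min_eq_right h]
    ring

noncomputable def takagiTerm (m : ℕ) (x : ℝ) (k : ℕ) : ℝ :=
  ((m : ℝ) ^ k)⁻¹ * min (nearestIntDist ((m : ℝ) ^ k * x)) (1 / m)

theorem omegaT_eq_tsum_takagiTerm (m : ℕ) (x : ℝ) : omegaT m x = ∑' k, takagiTerm m x k := rfl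

theorem summable_takagiTerm {m : ℕ} (hm : 1 < m) (x : ℝ) : Summable (takagiTerm m x) := by
  have hm' : (1 : ℝ) < m := by exact_mod_cast hm
  refine Summable.of_nonneg_of_le (fun k => ?_) (fun k => ?_)
    (summable_geometric_of_lt_one (by positivity) (inv_lt_one_of_one_lt₀ hm'))
  · exact mul_nonneg (by positivity) (le_min (nearestIntDist_nonneg _) (by positivity))
  · rw [takagiTerm, inv_pow]
    refine mul_le_of_le_one_right (by positivity) ((min_le_left _ _).trans ?_)
    linarith [nearestIntDist_le_half ((m : ℝ) ^ k * x)]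

theorem takagiTerm_two_even_add_odd (x : ℝ) (k : ℕ) :
    takagiTerm 2 x (2 * k) + takagiTerm 2 x (2 * k + 1) = 2 * takagiTerm 4 x k := by
  have hpow : (2 : ℝ) ^ (2 * k) = 4 ^ k := by rw [pow_mul]; norm_num
  have hmin (y : ℝ) : min (nearestIntDist y) (1 / 2) = nearestIntDist y :=
    min_eq_left (nearestIntDist_le_half y)
  have hkey := nearestIntDist_add_half_nearestIntDist_two_mul ((4 : ℝ) ^ k * x)
  rw [show (2 : ℝ) * (4 ^ k * x) = 4 ^ k * 2 * x by ring] at hkey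
  simp only [takagiTerm, Nat.cast_ofNat, hmin, pow_succ, hpow]
  linear_combination ((4 : ℝ) ^ k)⁻¹ * hkey

theorem stmt2 (x : ℝ) : omegaT 4 x = (1 / 2) * omegaT 2 x := by
  have h : omegaT 2 x = 2 * omegaT 4 x := by
    rw [omegaT_eq_tsum_takagiTerm, tsum_eq_tsum_even_add_odd (summable_takagiTerm one_lt_two x)]
    simp only [takagiTerm_two_even_add_odd, tsum_mul_left, omegaT_eq_tsum_takagiTerm]
  rw [h]
  ring
end

section
/- Let f : [0,1] → ℝ be concave on [0,1] with max{f(0), f(1)} ≤ 0, and suppose that f(λx_1 + (1−λ)x_2) ≤ λ·f(x_1) + (1−λ)·f(x_2) + (x_2 − x_1) holds for all λ, x_1, x_2 ∈ [0,1] with x_1 ≤ x_2. Then f ∈ ℱ_m for every integer m ≥ 2. -/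
/-!
Let `a` and `b` be the smallest and largest of the `x_i` and write their mean as
`μ = λ a + (1 - λ) b`. The hypothesis bounds `f μ` by `λ f a + (1 - λ) f b + (b - a)`. By concavity
each `f (x_i)` lies above the chord of `f` over `[a, b]`, and since the chord is affine its average
over the `x_i` is its value at `μ`, namely `λ f a + (1 - λ) f b`.
-/

/-- The class `ℱ_m`: real functions on `[0,1]` with `max{f(0), f(1)} ≤ 0` such
that for all `x_1, …, x_m ∈ [0,1]` with `x_1` minimal and `x_m` maximal,
`f((x_1 + ⋯ + x_m)/m) ≤ (f(x_1) + ⋯ + f(x_m))/m + (x_m − x_1)`.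
(The designated minimal and maximal entries are indexed by `i₀` and `i₁`.) -/
def memF (m : ℕ) (f : ℝ → ℝ) : Prop :=
  max (f 0) (f 1) ≤ 0 ∧
  ∀ x : Fin m → ℝ, (∀ i, x i ∈ Set.Icc (0 : ℝ) 1) →
    ∀ i₀ i₁ : Fin m, (∀ i, x i₀ ≤ x i) → (∀ i, x i ≤ x i₁) →
      f ((∑ i, x i) / m) ≤ (∑ i, f (x i)) / m + (x i₁ - x i₀)

/-- `F_m(x) = sup{f(x) : f ∈ ℱ_m}`, the pointwise supremum of the class `ℱ_m`. -/
noncomputable def bigF (m : ℕ) (x : ℝ) : ℝ :=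
  sSup {y : ℝ | ∃ f : ℝ → ℝ, memF m f ∧ f x = y}

open Set Finset
open scoped BigOperators

theorem ConcaveOn.sub_mul_add_sub_mul_le {s : Set ℝ} {f : ℝ → ℝ} (hf : ConcaveOn ℝ s f)
    {a b x : ℝ} (ha : a ∈ s) (hb : b ∈ s) (hx : x ∈ Icc a b) :
    (b - x) * f a + (x - a) * f b ≤ (b - a) * f x := by
  rcases (hx.1.trans hx.2).eq_or_lt with rfl | hab
  · obtain rfl : x = a := le_antisymm hx.2 hx.1
    simp
  have hba : 0 < b - a := sub_pos.2 hab
  have key := hf.2 ha hb (div_nonneg (sub_nonneg.2 hx.2) hba.le)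
    (div_nonneg (sub_nonneg.2 hx.1) hba.le) (by field)
  have hpt : (b - x) / (b - a) * a + (x - a) / (b - a) * b = x := by field
  simp only [smul_eq_mul, hpt] at key
  rw [div_mul_eq_mul_div, div_mul_eq_mul_div, ← add_div, div_le_iff₀ hba] at key
  linarith

theorem expect_sub_mul_add_sub_mul {ι : Type*} [Fintype ι] [Nonempty ι] (x : ι → ℝ)
    (a b p q : ℝ) :
    𝔼 i, ((b - x i) * p + (x i - a) * q) = (b - 𝔼 i, x i) * p + (𝔼 i, x i - a) * q := by
  simp only [expect_add_distrib, ← expect_mul, expect_sub_distrib, Fintype.expect_const]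

theorem ConcaveOn.sub_mul_add_sub_mul_le_expect {ι : Type*} [Fintype ι] [Nonempty ι]
    {s : Set ℝ} {f : ℝ → ℝ} (hf : ConcaveOn ℝ s f) {a b : ℝ} (ha : a ∈ s) (hb : b ∈ s)
    {x : ι → ℝ} (hx : ∀ i, x i ∈ Icc a b) :
    (b - 𝔼 i, x i) * f a + (𝔼 i, x i - a) * f b ≤ (b - a) * 𝔼 i, f (x i) := by
  rw [← expect_sub_mul_add_sub_mul, mul_expect]
  exact expect_le_expect fun i _ ↦ hf.sub_mul_add_sub_mul_le ha hb (hx i)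

theorem expect_mem_Icc {ι : Type*} [Fintype ι] [Nonempty ι] {x : ι → ℝ} {a b : ℝ}
    (hx : ∀ i, x i ∈ Icc a b) : 𝔼 i, x i ∈ Icc a b :=
  ⟨le_expect univ_nonempty fun i _ ↦ (hx i).1, expect_le univ_nonempty fun i _ ↦ (hx i).2⟩

theorem ConcaveOn.map_expect_le_expect_map_add {ι : Type*} [Fintype ι] [Nonempty ι]
    {s : Set ℝ} {f : ℝ → ℝ} (hf : ConcaveOn ℝ s f) {a b c : ℝ} (ha : a ∈ s) (hb : b ∈ s)
    {x : ι → ℝ} (hx : ∀ i, x i ∈ Icc a b)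
    (hgap : ∀ lam ∈ Icc (0 : ℝ) 1, f (lam * a + (1 - lam) * b) ≤ lam * f a + (1 - lam) * f b + c) :
    f (𝔼 i, x i) ≤ 𝔼 i, f (x i) + c := by
  obtain ⟨hμa, hμb⟩ := expect_mem_Icc hx
  rcases (hμa.trans hμb).eq_or_lt with rfl | hab
  · have hconst (i : ι) : x i = a := le_antisymm (hx i).2 (hx i).1
    simpa [hconst] using hgap 1 (by simp)
  set μ := 𝔼 i, x i
  have hba : 0 < b - a := sub_pos.2 hab
  set lam := (b - μ) / (b - a)
  have hlam : lam ∈ Icc (0 : ℝ) 1 :=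
    ⟨div_nonneg (sub_nonneg.2 hμb) hba.le, div_le_one_of_le₀ (by linarith) hba.le⟩
  have hμ : lam * a + (1 - lam) * b = μ := by field
  have hchord : lam * f a + (1 - lam) * f b ≤ 𝔼 i, f (x i) := by
    rw [show lam * f a + (1 - lam) * f b = ((b - μ) * f a + (μ - a) * f b) / (b - a) by field,
      div_le_iff₀' hba]
    exact hf.sub_mul_add_sub_mul_le_expect ha hb hx
  have := hgap lam hlam
  rw [hμ] at this
  linarith

theorem stmt15_general {f : ℝ → ℝ} (hconc : ConcaveOn ℝ (Set.Icc (0 : ℝ) 1) f)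
    (hb : max (f 0) (f 1) ≤ 0)
    (hineq : ∀ lam x₁ x₂ : ℝ, lam ∈ Set.Icc (0 : ℝ) 1 →
      x₁ ∈ Set.Icc (0 : ℝ) 1 → x₂ ∈ Set.Icc (0 : ℝ) 1 → x₁ ≤ x₂ →
      f (lam * x₁ + (1 - lam) * x₂)
        ≤ lam * f x₁ + (1 - lam) * f x₂ + (x₂ - x₁))
    {m : ℕ} :
    memF m f := by
  refine ⟨hb, fun x hx i₀ i₁ hmin hmax ↦ ?_⟩
  have : Nonempty (Fin m) := ⟨i₀⟩
  have hmean (g : Fin m → ℝ) : (∑ i, g i) / m = 𝔼 i, g i := by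
    rw [Fintype.expect_eq_sum_div_card, Fintype.card_fin]
  rw [hmean, hmean]
  exact hconc.map_expect_le_expect_map_add (hx i₀) (hx i₁) (fun i ↦ ⟨hmin i, hmax i⟩)
    fun lam hlam ↦ hineq lam _ _ hlam (hx i₀) (hx i₁) (hmin i₁)

theorem stmt15 {f : ℝ → ℝ} (hconc : ConcaveOn ℝ (Set.Icc (0 : ℝ) 1) f)
    (hb : max (f 0) (f 1) ≤ 0)
    (hineq : ∀ lam x₁ x₂ : ℝ, lam ∈ Set.Icc (0 : ℝ) 1 →
      x₁ ∈ Set.Icc (0 : ℝ) 1 → x₂ ∈ Set.Icc (0 : ℝ) 1 → x₁ ≤ x₂ →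
      f (lam * x₁ + (1 - lam) * x₂)
        ≤ lam * f x₁ + (1 - lam) * f x₂ + (x₂ - x₁))
    {m : ℕ} (hm : 2 ≤ m) :
    memF m f :=
  stmt15_general hconc hb hineq
end
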